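/- Let U ⊆ ℂ be open, ζ₁, ζ₂ holomorphic on U with ζ₂′ ≠ 0 on U, R = ζ₁′/ζ₂′ with Im R > 0 on U, and suppose F(z) = (Re ζ₁(z), Re ζ₂(z)) is a homeomorphism of U onto an open set V ⊆ ℝ² with inverse G; set y₁ = Im ζ₁ ∘ G, y₂ = Im ζ₂ ∘ G. Let ρ : V → ℝ be differentiable with ∂ρ/∂x₁ = −y₂/π and ∂ρ/∂x₂ = y₁/π on V. Then ρ is twice differentiable on V and its Hessian at the point F(z) is the matrix (1/(π Im R(z))) · [[1, −Re R(z)], [−Re R(z), |R(z)|²]]; this matrix is positive definite for every z ∈ U, and hence ρ is strictly convex on V whenever V is convex. -/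

import Mathlib

/-!
Since `∇ρ = π⁻¹ (-y₂, y₁)`, the Hessian of `ρ` is `π⁻¹` times the derivative of
`(-Im ζ₂, Im ζ₁) ∘ G`, and by the inverse function theorem `dG = (dF)⁻¹` with
`dF w = (Re (ζ₁' w), Re (ζ₂' w))`. Writing `β = ζ₂' w`, so that `ζ₁' w = R β`, the real parts
`u = (Re (R β), Re β)` determine `Im β` and `Im (R β)` linearly, with denominator `Im R`; this gives
the stated matrix. Its quadratic form is `|u₁ - R u₂|² / (π Im R) > 0`, and restricting to segments
shows that a function with positive definite second derivative on an open convex set is strictly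
convex.
-/

open Complex ContinuousLinearMap Filter Topology

theorem StrictConvexOn.of_hasFDerivAt_fderiv {E : Type*} [NormedAddCommGroup E] [NormedSpace ℝ E]
    {s : Set E} {f : E → ℝ} {f'' : E → E →L[ℝ] E →L[ℝ] ℝ} (hs : Convex ℝ s) (hso : IsOpen s)
    (hf : ∀ x ∈ s, DifferentiableAt ℝ f x) (hf'' : ∀ x ∈ s, HasFDerivAt (fderiv ℝ f) (f'' x) x)
    (hpos : ∀ x ∈ s, ∀ u ≠ 0, 0 < f'' x u u) : StrictConvexOn ℝ s f := by
  refine ⟨hs, fun x hx y hy hxy a b ha hb hab => ?_⟩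
  set ℓ := AffineMap.lineMap (k := ℝ) x y
  set D := ℓ ⁻¹' s
  have hD : IsOpen D := hso.preimage AffineMap.lineMap_continuous
  have hℓ : ∀ t, HasDerivAt ℓ (y - x) t := fun t => AffineMap.hasDerivAt_lineMap
  have hg' : ∀ t ∈ D, HasDerivAt (f ∘ ℓ) (fderiv ℝ f (ℓ t) (y - x)) t := fun t ht =>
    (hf _ ht).hasFDerivAt.comp_hasDerivAt t (hℓ t)
  have hg'' : ∀ t ∈ D,
      HasDerivAt (fun t => fderiv ℝ f (ℓ t) (y - x)) (f'' (ℓ t) (y - x) (y - x)) t :=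
    fun t ht => ((apply ℝ ℝ (y - x)).hasFDerivAt.comp_hasDerivAt t
      ((hf'' _ ht).comp_hasDerivAt t (hℓ t)))
  have hconv : StrictConvexOn ℝ D (f ∘ ℓ) := by
    refine strictConvexOn_of_deriv2_pos' (hs.affine_preimage ℓ)
      (fun t ht => (hg' t ht).continuousAt.continuousWithinAt) fun t ht => ?_
    have hderiv : deriv (f ∘ ℓ) =ᶠ[𝓝 t] fun t => fderiv ℝ f (ℓ t) (y - x) := by
      filter_upwards [hD.mem_nhds ht] with s hs using (hg' s hs).deriv
    rw [Function.iterate_succ_apply, Function.iterate_one, hderiv.deriv_eq, (hg'' t ht).deriv]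
    exact hpos _ ht _ (sub_ne_zero.mpr hxy.symm)
  have h := hconv.2 (x := 0) (y := 1) (by simpa [D, ℓ] using hx) (by simpa [D, ℓ] using hy)
    zero_ne_one ha hb hab
  obtain rfl : a = 1 - b := eq_sub_of_add_eq hab
  simpa [ℓ, AffineMap.lineMap_apply_module] using h

/-- The matrix `(1 / (π Im R)) [[1, -Re R], [-Re R, |R|²]]` as a bilinear form. -/
noncomputable def ronkinHessian (R : ℂ) : ℝ × ℝ →L[ℝ] ℝ × ℝ →L[ℝ] ℝ :=
  (1 / (Real.pi * R.im)) •
    ((fst ℝ ℝ ℝ).smulRight (fst ℝ ℝ ℝ)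
      - R.re • ((fst ℝ ℝ ℝ).smulRight (snd ℝ ℝ ℝ) + (snd ℝ ℝ ℝ).smulRight (fst ℝ ℝ ℝ))
      + (‖R‖ ^ 2) • (snd ℝ ℝ ℝ).smulRight (snd ℝ ℝ ℝ))

lemma ronkinHessian_apply (R : ℂ) (u v : ℝ × ℝ) :
    ronkinHessian R u v = (1 / (Real.pi * R.im)) *
      (u.1 * v.1 - R.re * (u.1 * v.2 + u.2 * v.1) + ‖R‖ ^ 2 * (u.2 * v.2)) := by
  simp [ronkinHessian, smul_eq_mul]
  ring

lemma norm_ofReal_sub_mul_ofReal_sq (R : ℂ) (x y : ℝ) :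
    ‖(x - R * y : ℂ)‖ ^ 2 = x * x - 2 * R.re * (x * y) + ‖R‖ ^ 2 * (y * y) := by
  simp only [Complex.sq_norm, normSq_apply, sub_re, sub_im, mul_re, mul_im, ofReal_re, ofReal_im]
  ring

lemma ofReal_sub_mul_ofReal_ne_zero {R : ℂ} (hR : R.im ≠ 0) {u : ℝ × ℝ} (hu : u ≠ 0) :
    (u.1 - R * u.2 : ℂ) ≠ 0 := by
  intro h
  have him : R.im * u.2 = 0 := by simpa using congrArg im h
  have hre : u.1 - R.re * u.2 = 0 := by simpa using congrArg re h
  have h2 : u.2 = 0 := (mul_eq_zero.mp him).resolve_left hR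
  exact hu (Prod.ext (by simpa [h2] using hre) h2)

lemma ronkinHessian_apply_self (R : ℂ) (u : ℝ × ℝ) :
    ronkinHessian R u u = (1 / (Real.pi * R.im)) * ‖(u.1 - R * u.2 : ℂ)‖ ^ 2 := by
  rw [ronkinHessian_apply, norm_ofReal_sub_mul_ofReal_sq]
  ring

lemma ronkinHessian_apply_self_pos {R : ℂ} (hR : 0 < R.im) {u : ℝ × ℝ} (hu : u ≠ 0) :
    0 < ronkinHessian R u u := by
  have hne := ofReal_sub_mul_ofReal_ne_zero hR.ne' hu
  have hπ := Real.pi_pos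
  rw [ronkinHessian_apply_self]
  positivity

lemma ronkinHessian_apply_re_mul_re (R β : ℂ) (hR : R.im ≠ 0) (v : ℝ × ℝ) :
    ronkinHessian R ((R * β).re, β.re) v = Real.pi⁻¹ * (-β.im * v.1 + (R * β).im * v.2) := by
  rw [ronkinHessian_apply, Complex.sq_norm, normSq_apply]
  simp only [mul_re, mul_im]
  field_simp
  ring

/-- The differential of `w ↦ (Re ζ₁ w, Re ζ₂ w)` where `ζ₁' = A`, `ζ₂' = B`. -/
noncomputable def reMulProd (A B : ℂ) : ℂ →L[ℝ] ℝ × ℝ :=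
  (reCLM.comp (ContinuousLinearMap.mul ℝ ℂ A)).prod (reCLM.comp (ContinuousLinearMap.mul ℝ ℂ B))

@[simp] lemma reMulProd_apply (A B w : ℂ) : reMulProd A B w = ((A * w).re, (B * w).re) := rfl

lemma ne_zero_of_div_im_ne_zero {A B : ℂ} (hR : (A / B).im ≠ 0) : B ≠ 0 := by
  rintro rfl
  simp at hR

lemma reMulProd_injective {A B : ℂ} (hR : (A / B).im ≠ 0) :
    Function.Injective (reMulProd A B) := by
  have hB := ne_zero_of_div_im_ne_zero hR
  rw [injective_iff_map_eq_zero]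
  intro w hw
  have hA : A * w = A / B * (B * w) := by field_simp
  simp only [reMulProd_apply, Prod.mk_eq_zero, hA, mul_re] at hw
  obtain ⟨him, hre⟩ := hw
  rw [hre, mul_zero, zero_sub, neg_eq_zero] at him
  have hBw : B * w = 0 := Complex.ext hre ((mul_eq_zero.mp him).resolve_left hR)
  simpa [hB] using hBw

noncomputable def reMulProdEquiv {A B : ℂ} (hR : (A / B).im ≠ 0) : ℂ ≃L[ℝ] ℝ × ℝ :=
  (LinearMap.linearEquivOfInjective (reMulProd A B).toLinearMap (reMulProd_injective hR)
    (by simp [finrank_real_complex])).toContinuousLinearEquiv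

@[simp] lemma coe_reMulProdEquiv {A B : ℂ} (hR : (A / B).im ≠ 0) :
    (reMulProdEquiv hR : ℂ →L[ℝ] ℝ × ℝ) = reMulProd A B := rfl

lemma hasFDerivAt_re_prod {ζ₁ ζ₂ : ℂ → ℂ} {A B z : ℂ} (h₁ : HasDerivAt ζ₁ A z)
    (h₂ : HasDerivAt ζ₂ B z) :
    HasFDerivAt (fun w => ((ζ₁ w).re, (ζ₂ w).re)) (reMulProd A B) z := by
  refine ((reCLM.hasFDerivAt.comp z (h₁.hasFDerivAt.restrictScalars ℝ)).prodMk
    (reCLM.hasFDerivAt.comp z (h₂.hasFDerivAt.restrictScalars ℝ))).congr_fderiv ?_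
  ext w <;> simp [mul_comm]

lemma hasFDerivAt_im_comp {ζ : ℂ → ℂ} {G : ℝ × ℝ → ℂ} {C : ℂ} {G' : ℝ × ℝ →L[ℝ] ℂ}
    {p : ℝ × ℝ} (hζ : HasDerivAt ζ C (G p)) (hG : HasFDerivAt G G' p) :
    HasFDerivAt (fun q => (ζ (G q)).im)
      (imCLM.comp ((ContinuousLinearMap.mul ℝ ℂ C).comp G')) p := by
  refine (imCLM.hasFDerivAt.comp p
    ((hζ.hasFDerivAt.restrictScalars ℝ).comp p hG)).congr_fderiv ?_
  ext <;> simp [mul_comm]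

lemma eq_smul_fst_add_smul_snd (L : ℝ × ℝ →L[ℝ] ℝ) :
    L = L (1, 0) • fst ℝ ℝ ℝ + L (0, 1) • snd ℝ ℝ ℝ := by
  ext <;> simp

lemma hasFDerivAt_fderiv_ronkinHessian {ζ₁ ζ₂ : ℂ → ℂ} {A B : ℂ} {G : ℝ × ℝ → ℂ}
    {ρ : ℝ × ℝ → ℝ} {p : ℝ × ℝ} (hR : (A / B).im ≠ 0) (h₁ : HasDerivAt ζ₁ A (G p))
    (h₂ : HasDerivAt ζ₂ B (G p)) (hG : ContinuousAt G p)
    (hFG : ∀ᶠ q in 𝓝 p, ((ζ₁ (G q)).re, (ζ₂ (G q)).re) = q)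
    (hρ : fderiv ℝ ρ =ᶠ[𝓝 p] fun q =>
      (-(ζ₂ (G q)).im / Real.pi) • fst ℝ ℝ ℝ + ((ζ₁ (G q)).im / Real.pi) • snd ℝ ℝ ℝ) :
    HasFDerivAt (fderiv ℝ ρ) (ronkinHessian (A / B)) p := by
  set e := reMulProdEquiv hR
  have hG' : HasFDerivAt G (e.symm : ℝ × ℝ →L[ℝ] ℂ) p :=
    .of_local_left_inverse hG (by simpa [e] using hasFDerivAt_re_prod h₁ h₂) hFG
  have hy₁ := hasFDerivAt_im_comp h₁ hG'
  have hy₂ := hasFDerivAt_im_comp h₂ hG'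
  simp only [div_eq_mul_inv] at hρ
  refine ((((hy₂.fun_neg.mul_const Real.pi⁻¹).smul_const (fst ℝ ℝ ℝ)).add
    ((hy₁.mul_const Real.pi⁻¹).smul_const (snd ℝ ℝ ℝ))).congr_of_eventuallyEq hρ).congr_fderiv
    (ContinuousLinearMap.ext fun u => ContinuousLinearMap.ext fun v => ?_)
  obtain ⟨w, rfl⟩ := e.surjective u
  have hA : A * w = A / B * (B * w) := by field_simp [ne_zero_of_div_im_ne_zero hR]
  have hew : e w = ((A / B * (B * w)).re, (B * w).re) := by rw [← hA]; rfl
  clear_value e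
  calc _ = Real.pi⁻¹ * (-(B * w).im * v.1 + (A * w).im * v.2) := by simp; ring
    _ = _ := by rw [hew, ronkinHessian_apply_re_mul_re _ _ hR, ← hA]

theorem ronkin_function_hessian_strictly_convex_general
    (U : Set ℂ) (V : Set (ℝ × ℝ)) (hV : IsOpen V)
    (ζ₁ ζ₂ ζ₁' ζ₂' : ℂ → ℂ)
    (h₁ : ∀ z ∈ U, HasDerivAt ζ₁ (ζ₁' z) z)
    (h₂ : ∀ z ∈ U, HasDerivAt ζ₂ (ζ₂' z) z)
    (hR : ∀ z ∈ U, 0 < (ζ₁' z / ζ₂' z).im)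
    (G : ℝ × ℝ → ℂ)
    (hFmem : ∀ z ∈ U, ((ζ₁ z).re, (ζ₂ z).re) ∈ V)
    (hGmem : ∀ p ∈ V, G p ∈ U)
    (hGF : ∀ z ∈ U, G ((ζ₁ z).re, (ζ₂ z).re) = z)
    (hFG : ∀ p ∈ V, (((ζ₁ (G p)).re, (ζ₂ (G p)).re) : ℝ × ℝ) = p)
    (hGcont : ContinuousOn G V)
    (ρ : ℝ × ℝ → ℝ)
    (hρdiff : ∀ p ∈ V, DifferentiableAt ℝ ρ p)
    (hρx₁ : ∀ p ∈ V, fderiv ℝ ρ p (1, 0) = -(ζ₂ (G p)).im / Real.pi)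
    (hρx₂ : ∀ p ∈ V, fderiv ℝ ρ p (0, 1) = (ζ₁ (G p)).im / Real.pi) :
    (∀ z ∈ U,
      DifferentiableAt ℝ (fderiv ℝ ρ) ((ζ₁ z).re, (ζ₂ z).re) ∧
      (∀ u v : ℝ × ℝ,
        fderiv ℝ (fderiv ℝ ρ) ((ζ₁ z).re, (ζ₂ z).re) u v =
          (1 / (Real.pi * (ζ₁' z / ζ₂' z).im)) *
            (u.1 * v.1 - (ζ₁' z / ζ₂' z).re * (u.1 * v.2 + u.2 * v.1) +
              ‖ζ₁' z / ζ₂' z‖ ^ 2 * (u.2 * v.2))) ∧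
      (∀ u : ℝ × ℝ, u ≠ 0 →
        0 < (1 / (Real.pi * (ζ₁' z / ζ₂' z).im)) *
            (u.1 * u.1 - 2 * (ζ₁' z / ζ₂' z).re * (u.1 * u.2) +
              ‖ζ₁' z / ζ₂' z‖ ^ 2 * (u.2 * u.2)))) ∧
    (Convex ℝ V → StrictConvexOn ℝ V ρ) := by
  have hgrad : ∀ p ∈ V, fderiv ℝ ρ p =
      (-(ζ₂ (G p)).im / Real.pi) • fst ℝ ℝ ℝ + ((ζ₁ (G p)).im / Real.pi) • snd ℝ ℝ ℝ :=
    fun p hp => by rw [← hρx₁ p hp, ← hρx₂ p hp]; exact eq_smul_fst_add_smul_snd _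
  have hHess : ∀ p ∈ V,
      HasFDerivAt (fderiv ℝ ρ) (ronkinHessian (ζ₁' (G p) / ζ₂' (G p))) p := fun p hp =>
    hasFDerivAt_fderiv_ronkinHessian (hR _ (hGmem p hp)).ne' (h₁ _ (hGmem p hp))
      (h₂ _ (hGmem p hp)) (hGcont.continuousAt (hV.mem_nhds hp))
      (eventually_of_mem (hV.mem_nhds hp) hFG) (eventually_of_mem (hV.mem_nhds hp) hgrad)
  refine ⟨fun z hz => ?_, fun hconv => .of_hasFDerivAt_fderiv hconv hV hρdiff hHess
    fun p hp u hu => ronkinHessian_apply_self_pos (hR _ (hGmem p hp)) hu⟩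
  have hHess_z := hHess _ (hFmem z hz)
  rw [hGF z hz] at hHess_z
  refine ⟨hHess_z.differentiableAt, fun u v => by rw [hHess_z.fderiv, ronkinHessian_apply],
    fun u hu => ?_⟩
  simpa only [ronkinHessian_apply_self, norm_ofReal_sub_mul_ofReal_sq] using
    ronkinHessian_apply_self_pos (hR z hz) hu

/-- the Ronkin-type function `ρ` with gradient
`∇ρ = (−y₂/π, y₁/π)` in the amoeba coordinates `(x₁,x₂) = (Re ζ₁, Re ζ₂)` is twice
differentiable, its Hessian at `F(z)` is `(1/(π Im R))[[1, −Re R],[−Re R, |R|²]]` with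
`R = ζ₁′/ζ₂′` evaluated at `z`; this matrix is positive definite, and hence `ρ` is
strictly convex on `V` whenever `V` is convex. -/
theorem ronkin_function_hessian_strictly_convex
    (U : Set ℂ) (hU : IsOpen U) (V : Set (ℝ × ℝ)) (hV : IsOpen V)
    (ζ₁ ζ₂ ζ₁' ζ₂' : ℂ → ℂ)
    (h₁ : ∀ z ∈ U, HasDerivAt ζ₁ (ζ₁' z) z)
    (h₂ : ∀ z ∈ U, HasDerivAt ζ₂ (ζ₂' z) z)
    (hne : ∀ z ∈ U, ζ₂' z ≠ 0)
    (hR : ∀ z ∈ U, 0 < (ζ₁' z / ζ₂' z).im)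
    (G : ℝ × ℝ → ℂ)
    (hFmem : ∀ z ∈ U, ((ζ₁ z).re, (ζ₂ z).re) ∈ V)
    (hGmem : ∀ p ∈ V, G p ∈ U)
    (hGF : ∀ z ∈ U, G ((ζ₁ z).re, (ζ₂ z).re) = z)
    (hFG : ∀ p ∈ V, (((ζ₁ (G p)).re, (ζ₂ (G p)).re) : ℝ × ℝ) = p)
    (hGcont : ContinuousOn G V)
    (ρ : ℝ × ℝ → ℝ)
    (hρdiff : ∀ p ∈ V, DifferentiableAt ℝ ρ p)
    (hρx₁ : ∀ p ∈ V, fderiv ℝ ρ p (1, 0) = -(ζ₂ (G p)).im / Real.pi)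
    (hρx₂ : ∀ p ∈ V, fderiv ℝ ρ p (0, 1) = (ζ₁ (G p)).im / Real.pi) :
    (∀ z ∈ U,
      DifferentiableAt ℝ (fderiv ℝ ρ) ((ζ₁ z).re, (ζ₂ z).re) ∧
      (∀ u v : ℝ × ℝ,
        fderiv ℝ (fderiv ℝ ρ) ((ζ₁ z).re, (ζ₂ z).re) u v =
          (1 / (Real.pi * (ζ₁' z / ζ₂' z).im)) *
            (u.1 * v.1 - (ζ₁' z / ζ₂' z).re * (u.1 * v.2 + u.2 * v.1) +
              ‖ζ₁' z / ζ₂' z‖ ^ 2 * (u.2 * v.2))) ∧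
      (∀ u : ℝ × ℝ, u ≠ 0 →
        0 < (1 / (Real.pi * (ζ₁' z / ζ₂' z).im)) *
            (u.1 * u.1 - 2 * (ζ₁' z / ζ₂' z).re * (u.1 * u.2) +
              ‖ζ₁' z / ζ₂' z‖ ^ 2 * (u.2 * u.2)))) ∧
    (Convex ℝ V → StrictConvexOn ℝ V ρ) :=
  ronkin_function_hessian_strictly_convex_general U V hV ζ₁ ζ₂ ζ₁' ζ₂' h₁ h₂ hR G hFmem hGmem hGF
    hFG hGcont ρ hρdiff hρx₁ hρx₂
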